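/- arXiv:1907.01401 — 2 statements merged into one kernel-verified Lean document; each statement's English description precedes it below -/
import Mathlib

section
/- Define a graph on V = 𝔽₂^D (D even) by joining x, x' whenever there exists i ∈ [1,D] with x + x' = e_i and (x, e_i) = (x', e_i) = 0. If x, x' lie in the same connected component of this graph, then u(x) = u(x'). -/
/-- The bilinear form on `𝔽₂^D` determined by `(e_i, e_j) = 1` iff `|i - j| = 1`. -/
def bform (D : ℕ) (x y : Fin D → ZMod 2) : ZMod 2 :=
  ∑ a : Fin D, ∑ b : Fin D,
    if a.1 = b.1 + 1 ∨ b.1 = a.1 + 1 then x a * y b else 0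

/-- The basis vector `e_i` of `𝔽₂^n` (1-based index `i`). -/
def basisVec (n i : ℕ) : Fin n → ZMod 2 := fun k => if k.1 + 1 = i then 1 else 0

/-- Adjacency in the graph on `V`: `x ∼ x'` iff `x + x' = e_i` and
`(x, e_i) = (x', e_i) = 0` for some `i ∈ [1,D]`. -/
def Adj (D : ℕ) (x x' : Fin D → ZMod 2) : Prop :=
  ∃ i : ℕ, 1 ≤ i ∧ i ≤ D ∧ x + x' = basisVec D i ∧
    bform D x (basisVec D i) = 0 ∧ bform D x' (basisVec D i) = 0

/-- The vector `e_I = ∑_{i ∈ I} e_i` of an interval `I = (a,b)` (1-based). -/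
def eI (D : ℕ) (p : ℕ × ℕ) : Fin D → ZMod 2 :=
  fun k => if p.1 ≤ k.1 + 1 ∧ k.1 + 1 ≤ p.2 then 1 else 0

/-- Normal-form decomposition into pairwise non-touching increasing intervals. -/
def NormalDecomp (D : ℕ) (L : List (ℕ × ℕ)) : Prop :=
  (∀ p ∈ L, 1 ≤ p.1 ∧ p.1 ≤ p.2 ∧ p.2 ≤ D) ∧ L.Chain' (fun p q => p.2 + 2 ≤ q.1)

/-- `u` of a decomposition. -/
def uval (L : List (ℕ × ℕ)) : ℤ :=
  (L.countP (fun p => decide (p.1 % 2 = 0 ∧ p.2 % 2 = 1)) : ℤ) -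
    (L.countP (fun p => decide (p.1 % 2 = 1 ∧ p.2 % 2 = 0)) : ℤ)

/-! Read `x : 𝔽₂^D` as a 0/1 sequence on `ℕ` (1-based, zero outside `[1, D]`). Then `u(x)` is a sum
of local terms `jumpSign (x k) (x (k+1)) k`: the interval `[a, b]` contributes `-[a odd]` at its
left end `k = a - 1` and `+[b odd]` at its right end `k = b`. A move flips `x i` where
`x (i-1) = x (i+1)`; it changes only the terms at `k = i - 1` and `k = i`, and these changes
cancel. -/

def jumpSign (a b : ZMod 2) (k : ℕ) : ℤ :=
  (if a = 1 ∧ b = 0 ∧ k % 2 = 1 then 1 else 0) - (if a = 0 ∧ b = 1 ∧ k % 2 = 0 then 1 else 0)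

def jumpSum (f : ℕ → ZMod 2) (n : ℕ) : ℤ :=
  ∑ k ∈ Finset.range n, jumpSign (f k) (f (k + 1)) k

def intervalInd (p : ℕ × ℕ) (k : ℕ) : ZMod 2 :=
  if p.1 ≤ k ∧ k ≤ p.2 then 1 else 0

def extendZero (D : ℕ) (x : Fin D → ZMod 2) (k : ℕ) : ZMod 2 :=
  if h : 1 ≤ k ∧ k ≤ D then x ⟨k - 1, by omega⟩ else 0

theorem jumpSign_self (a : ZMod 2) (k : ℕ) : jumpSign a a k = 0 := by
  have h : ¬(a = 1 ∧ a = 0) := fun h => absurd (h.1.symm.trans h.2) (by decide)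
  rw [jumpSign, if_neg fun h' => h ⟨h'.1, h'.2.1⟩, if_neg fun h' => h ⟨h'.2.1, h'.1⟩, sub_zero]

theorem jumpSign_add_flip (a c : ZMod 2) (j : ℕ) :
    jumpSign a c j + jumpSign c a (j + 1) = jumpSign a (c + 1) j + jumpSign (c + 1) a (j + 1) := by
  have hj : (j + 1) % 2 = 1 - j % 2 := by omega
  rcases Nat.mod_two_eq_zero_or_one j with hj' | hj' <;>
  · revert a c
    simp only [jumpSign, hj, hj']
    decide

theorem jumpSum_flip {f : ℕ → ZMod 2} {n j : ℕ} (hj : j + 1 < n) (hf : f j = f (j + 2)) :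
    jumpSum (f + Pi.single (j + 1) 1) n = jumpSum f n := by
  have hsub : {j, j + 1} ⊆ Finset.range n := by
    intro k hk
    simp only [Finset.mem_insert, Finset.mem_singleton] at hk
    simp only [Finset.mem_range]
    omega
  unfold jumpSum
  rw [← Finset.sum_sdiff hsub, ← Finset.sum_sdiff hsub, Finset.sum_pair (by omega),
    Finset.sum_pair (by omega)]
  congr 1
  · refine Finset.sum_congr rfl fun k hk => ?_
    simp only [Finset.mem_sdiff, Finset.mem_insert, Finset.mem_singleton, not_or] at hk
    simp [hk.2.1, hk.2.2]
  · simpa [hf] using (jumpSign_add_flip (f (j + 2)) (f (j + 1)) j).symm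

theorem jumpSum_add {f g : ℕ → ZMod 2} {n : ℕ}
    (hfg : ∀ k < n, (f k = 0 ∧ f (k + 1) = 0) ∨ (g k = 0 ∧ g (k + 1) = 0)) :
    jumpSum (f + g) n = jumpSum f n + jumpSum g n := by
  unfold jumpSum
  rw [← Finset.sum_add_distrib]
  refine Finset.sum_congr rfl fun k hk => ?_
  rcases hfg k (Finset.mem_range.mp hk) with ⟨h, h'⟩ | ⟨h, h'⟩ <;>
    simp [h, h', jumpSign_self]

theorem jumpSum_intervalInd {p : ℕ × ℕ} {n : ℕ} (h1 : 1 ≤ p.1) (h12 : p.1 ≤ p.2) (h2 : p.2 < n) :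
    jumpSum (intervalInd p) n = p.2 % 2 - p.1 % 2 := by
  have hout : ∀ k, k < p.1 ∨ p.2 < k → intervalInd p k = 0 := fun k hk => if_neg (by omega)
  have hin : ∀ k, p.1 ≤ k → k ≤ p.2 → intervalInd p k = 1 := fun k hk hk' => if_pos ⟨hk, hk'⟩
  unfold jumpSum
  rw [Finset.sum_eq_add (p.1 - 1) p.2 (by omega) ?_ (by simp; omega) (by simp; omega)]
  · rw [hout _ (by omega), hin (p.1 - 1 + 1) (by omega) (by omega), hin p.2 h12 le_rfl,
      hout _ (by omega)]
    norm_num [jumpSign]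
    omega
  · intro k _ hk
    rcases lt_or_ge k (p.1 - 1) with hk' | hk'
    · rw [hout _ (by omega), hout _ (by omega), jumpSign_self]
    rcases lt_or_ge k p.2 with hk'' | hk''
    · rw [hin k (by omega) (by omega), hin _ (by omega) (by omega), jumpSign_self]
    · rw [hout _ (by omega), hout _ (by omega), jumpSign_self]

theorem uval_cons (p : ℕ × ℕ) (L : List (ℕ × ℕ)) :
    uval (p :: L) = p.2 % 2 - p.1 % 2 + uval L := by
  simp only [uval, List.countP_cons]
  rcases Nat.mod_two_eq_zero_or_one p.1 with h | h <;>
    rcases Nat.mod_two_eq_zero_or_one p.2 with h' | h' <;> simp [h, h'] <;> omega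

theorem sum_intervalInd_eq_zero_of_lt {L : List (ℕ × ℕ)} (hc : L.IsChain fun p q => p.2 + 2 ≤ q.1)
    (hL : ∀ p ∈ L, p.1 ≤ p.2) {m : ℕ}
    (hm : ∀ p ∈ L.head?, m ≤ p.1) {k : ℕ} (hk : k < m) : (L.map intervalInd).sum k = 0 := by
  induction L generalizing m with
  | nil => rfl
  | cons q L ih =>
    rw [List.isChain_cons] at hc
    have hq : m ≤ q.1 := hm q rfl
    have hq' := hL q List.mem_cons_self
    simp only [List.map_cons, List.sum_cons, Pi.add_apply]
    rw [intervalInd, if_neg (by omega), zero_add]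
    exact ih hc.2 (fun p hp => hL p (List.mem_cons_of_mem q hp)) (m := q.2 + 2) hc.1 (by omega)

theorem jumpSum_sum_intervalInd {L : List (ℕ × ℕ)} (hc : L.IsChain fun p q => p.2 + 2 ≤ q.1)
    {n : ℕ} (hL : ∀ p ∈ L, 1 ≤ p.1 ∧ p.1 ≤ p.2 ∧ p.2 < n) :
    jumpSum (L.map intervalInd).sum n = uval L := by
  induction L with
  | nil => simp [jumpSum, uval, jumpSign_self]
  | cons p L ih =>
    have hL' : ∀ q ∈ L, 1 ≤ q.1 ∧ q.1 ≤ q.2 ∧ q.2 < n := fun q hq =>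
      hL q (List.mem_cons_of_mem p hq)
    obtain ⟨hp1, hp12, hp2⟩ := hL p List.mem_cons_self
    rw [List.isChain_cons] at hc
    have hrest : ∀ k ≤ p.2 + 1, (L.map intervalInd).sum k = 0 := fun k hk =>
      sum_intervalInd_eq_zero_of_lt hc.2 (fun q hq => (hL' q hq).2.1) hc.1 (by omega)
    rw [List.map_cons, List.sum_cons, jumpSum_add, jumpSum_intervalInd hp1 hp12 hp2, ih hc.2 hL',
      uval_cons]
    intro k _
    by_cases hk : k ≤ p.2
    · exact .inr ⟨hrest k (by omega), hrest (k + 1) (by omega)⟩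
    · exact .inl ⟨if_neg (by omega), if_neg (by omega)⟩

section Vectors

variable {D : ℕ}

theorem extendZero_add (x y : Fin D → ZMod 2) :
    extendZero D (x + y) = extendZero D x + extendZero D y := by
  funext k
  by_cases hk : 1 ≤ k ∧ k ≤ D <;> simp [extendZero, hk]

theorem extendZero_eI {p : ℕ × ℕ} (h1 : 1 ≤ p.1) (h2 : p.2 ≤ D) :
    extendZero D (eI D p) = intervalInd p := by
  funext k
  by_cases hk : 1 ≤ k ∧ k ≤ D
  · simp [extendZero, eI, intervalInd, hk, Nat.sub_add_cancel hk.1]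
  · simp only [extendZero, intervalInd, dif_neg hk]
    exact (if_neg (by omega)).symm

theorem extendZero_sum_eI {L : List (ℕ × ℕ)} (hL : ∀ p ∈ L, 1 ≤ p.1 ∧ p.2 ≤ D) :
    extendZero D (L.map (eI D)).sum = (L.map intervalInd).sum := by
  induction L with
  | nil => funext k; simp [extendZero]
  | cons p L ih =>
    obtain ⟨hp1, hp2⟩ := hL p List.mem_cons_self
    rw [List.map_cons, List.sum_cons, extendZero_add, extendZero_eI hp1 hp2,
      ih fun q hq => hL q (List.mem_cons_of_mem p hq), List.map_cons, List.sum_cons]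

theorem extendZero_basisVec {i : ℕ} (h1 : 1 ≤ i) (h2 : i ≤ D) :
    extendZero D (basisVec D i) = Pi.single i 1 := by
  funext k
  by_cases hk : 1 ≤ k ∧ k ≤ D
  · simp [extendZero, basisVec, hk, Nat.sub_add_cancel hk.1, Pi.single_apply]
  · simp only [extendZero, dif_neg hk, Pi.single_apply]
    exact (if_neg (by omega)).symm

theorem sum_ite_eq_extendZero (x : Fin D → ZMod 2) (m : ℕ) :
    ∑ a : Fin D, (if a.1 + 1 = m then x a else 0) = extendZero D x m := by
  by_cases hm : 1 ≤ m ∧ m ≤ D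
  · rw [Finset.sum_eq_single ⟨m - 1, by omega⟩
      (fun b _ hb => if_neg fun h => hb (by ext; simp; omega)) (by simp)]
    simp [extendZero, hm]
  · rw [extendZero, dif_neg hm]
    exact Finset.sum_eq_zero fun a _ => if_neg (by omega)

theorem bform_basisVec {j : ℕ} (hj : j < D) (x : Fin D → ZMod 2) :
    bform D x (basisVec D (j + 1)) = extendZero D x j + extendZero D x (j + 2) := by
  simp only [bform, basisVec]
  rw [Finset.sum_comm, Finset.sum_eq_single ⟨j, hj⟩
    (fun b _ hb => Finset.sum_eq_zero fun a _ => by simp [Fin.val_ne_of_ne hb]) (by simp)]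
  rw [← sum_ite_eq_extendZero, ← sum_ite_eq_extendZero, ← Finset.sum_add_distrib]
  refine Finset.sum_congr rfl fun a _ => ?_
  simp only [mul_ite, mul_one, mul_zero, add_left_inj]
  split_ifs <;> first | (exfalso; omega) | simp

theorem jumpSum_extendZero_eq_of_adj {x x' : Fin D → ZMod 2} (h : Adj D x x') :
    jumpSum (extendZero D x) (D + 1) = jumpSum (extendZero D x') (D + 1) := by
  obtain ⟨_ | j, hi1, hiD, hsum, hx, -⟩ := h
  · omega
  have hx' : x' = x + basisVec D (j + 1) := by
    rw [← hsum]
    funext k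
    exact (CharTwo.add_cancel_left (x k) (x' k)).symm
  rw [bform_basisVec (by omega), CharTwo.add_eq_zero] at hx
  rw [hx', extendZero_add, extendZero_basisVec hi1 hiD, jumpSum_flip (by omega) hx]

theorem uval_eq_jumpSum_extendZero {L : List (ℕ × ℕ)} (hL : NormalDecomp D L) :
    uval L = jumpSum (extendZero D (L.map (eI D)).sum) (D + 1) := by
  obtain ⟨hb, hc⟩ := hL
  rw [extendZero_sum_eI fun p hp => ⟨(hb p hp).1, (hb p hp).2.2⟩,
    jumpSum_sum_intervalInd hc fun p hp =>
      ⟨(hb p hp).1, (hb p hp).2.1, Nat.lt_succ_of_le (hb p hp).2.2⟩]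

end Vectors

theorem stmt_11_general (D : ℕ) (x x' : Fin D → ZMod 2)
    (h : Relation.ReflTransGen (Adj D) x x')
    (L L' : List (ℕ × ℕ)) (hL : NormalDecomp D L) (hLsum : (L.map (eI D)).sum = x)
    (hL' : NormalDecomp D L') (hL'sum : (L'.map (eI D)).sum = x') :
    uval L = uval L' := by
  subst hLsum hL'sum
  rw [uval_eq_jumpSum_extendZero hL, uval_eq_jumpSum_extendZero hL']
  simpa [Relation.reflTransGen_eq_self] using
    h.lift (fun y => jumpSum (extendZero D y) (D + 1)) fun _ _ => jumpSum_extendZero_eq_of_adj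

/-- If `x, x'` lie in the same connected component of the graph on `V` (`D` even),
then `u(x) = u(x')`. -/
theorem stmt_11 (D : ℕ) (hD : Even D) (x x' : Fin D → ZMod 2)
    (h : Relation.ReflTransGen (Adj D) x x')
    (L L' : List (ℕ × ℕ)) (hL : NormalDecomp D L) (hLsum : (L.map (eI D)).sum = x)
    (hL' : NormalDecomp D L') (hL'sum : (L'.map (eI D)).sum = x') :
    uval L = uval L' :=
  stmt_11_general D x x' h L L' hL hLsum hL' hL'sum
end

section
/- With D even and the graph on V = 𝔽₂^D as above (x ∼ x' iff x + x' = e_i and (x,e_i)=0 for some i), two vectors x, x' lie in the same connected component if and only if u(x) = u(x'). Consequently the connected components of the graph are exactly the fibers of u. -/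
/-!
Record `x` by its domain walls: the positions `j ∈ {0, …, D}` where `x_j ≠ x_{j+1}`, with `x`
extended by `0` at `0` and `D + 1`. Since `(x, e_i) = x_{i-1} + x_{i+1}`, the move
`x ↦ x + e_i` is allowed exactly when the walls `i - 1` and `i` are both present or both absent,
and it toggles both of them. So the graph is that of particles on `{0, …, D}` that are created and
annihilated in adjacent pairs, and the charge `∑_{j ∈ walls} (-1)^(j+1)` is invariant. An
interval `[a, b]` of a normal decomposition has walls `a - 1` and `b`, so the charge of `x` is
`2 u(x)`.

Conversely, a creation followed by an annihilation moves a particle two steps down, so every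
configuration descends (the sum of the positions drops) to one with no two adjacent particles and
with `j + 2` occupied only if `j` is. Such a configuration is `{r, r + 2, …, r + 2(k - 1)}` with
`r ∈ {0, 1}`, and is therefore determined by its charge `±k`.
-/

open Finset Relation

namespace DomainWall

def PairFlip (N : ℕ) (S T : Finset ℕ) : Prop :=
  ∃ p, p + 1 ≤ N ∧ (p ∈ S ↔ p + 1 ∈ S) ∧ T = symmDiff S {p, p + 1}

def charge (S : Finset ℕ) : ℤ := ∑ j ∈ S, (-1) ^ (j + 1)

def Reduced (S : Finset ℕ) : Prop := (∀ p ∈ S, p + 1 ∉ S) ∧ ∀ p, p + 2 ∈ S → p ∈ S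

section Particles

variable {N p q : ℕ} {S T : Finset ℕ}

theorem PairFlip.symm (h : PairFlip N S T) : PairFlip N T S := by
  obtain ⟨p, hp, hS, rfl⟩ := h
  refine ⟨p, hp, ?_, by rw [symmDiff_symmDiff_cancel_right]⟩
  simp only [mem_symmDiff, mem_insert, mem_singleton]
  grind

instance : Std.Symm (PairFlip N) := ⟨fun _ _ => PairFlip.symm⟩

theorem charge_pair (p : ℕ) : charge {p, p + 1} = 0 := by
  rw [charge, sum_pair (by omega), pow_succ (-1 : ℤ) (p + 1)]
  ring

theorem charge_union (h : Disjoint S T) : charge (S ∪ T) = charge S + charge T := sum_union h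

theorem PairFlip.charge_eq (h : PairFlip N S T) : charge S = charge T := by
  obtain ⟨p, -, hS, rfl⟩ := h
  by_cases hp : p ∈ S
  · have hsub : {p, p + 1} ⊆ S := insert_subset hp (singleton_subset_iff.2 (hS.1 hp))
    conv_lhs => rw [← sdiff_union_of_subset hsub]
    rw [symmDiff_of_ge hsub, charge_union sdiff_disjoint, charge_pair, add_zero]
  · have hdisj : Disjoint S {p, p + 1} := by
      simp only [disjoint_insert_right, disjoint_singleton_right]
      exact ⟨hp, mt hS.2 hp⟩
    rw [hdisj.symmDiff_eq_sup, sup_eq_union, charge_union hdisj, charge_pair, add_zero]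

theorem pairFlip_sdiff (hp : p ∈ S) (hp1 : p + 1 ∈ S) (hN : p + 1 ≤ N) :
    PairFlip N S (S \ {p, p + 1}) :=
  ⟨p, hN, iff_of_true hp hp1,
    (symmDiff_of_ge (insert_subset hp (singleton_subset_iff.2 hp1))).symm⟩

theorem reflTransGen_pairFlip_hop (hp2 : p + 2 ∈ S) (hp1 : p + 1 ∉ S) (hp : p ∉ S)
    (hN : p + 2 ≤ N) : ReflTransGen (PairFlip N) S (insert p (S.erase (p + 2))) := by
  have create : PairFlip N S (symmDiff S {p, p + 1}) := ⟨p, by omega, iff_of_false hp hp1, rfl⟩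
  have annihilate : PairFlip N (symmDiff S {p, p + 1}) (insert p (S.erase (p + 2))) := by
    refine ⟨p + 1, hN, ?_, ?_⟩
    · simp only [mem_symmDiff, mem_insert, mem_singleton]
      grind
    · ext j
      simp only [mem_symmDiff, mem_insert, mem_singleton, mem_erase]
      grind
  exact .tail (.single create) annihilate

theorem exists_reduced_reflTransGen (hS : S ⊆ Iic N) :
    ∃ R, Reduced R ∧ ReflTransGen (PairFlip N) S R := by
  induction hn : ∑ j ∈ S, j using Nat.strong_induction_on generalizing S with
  | _ n ih =>
  by_cases hadj : ∃ p ∈ S, p + 1 ∈ S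
  · obtain ⟨p, hp, hp1⟩ := hadj
    have hsub : {p, p + 1} ⊆ S := insert_subset hp (singleton_subset_iff.2 hp1)
    have hsum := sum_sdiff (f := fun j => j) hsub
    rw [sum_pair (by omega)] at hsum
    obtain ⟨R, hR, hTR⟩ := ih _ (by omega) (S := S \ {p, p + 1})
      (sdiff_subset.trans hS) rfl
    exact ⟨R, hR, .head (pairFlip_sdiff hp hp1 (mem_Iic.1 (hS hp1))) hTR⟩
  by_cases hhop : ∃ p, p + 2 ∈ S ∧ p ∉ S
  · obtain ⟨p, hp2, hp⟩ := hhop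
    have hp1 : p + 1 ∉ S := fun h => hadj ⟨p + 1, h, hp2⟩
    have hsum := add_sum_erase S (fun j => j) hp2
    have hT : insert p (S.erase (p + 2)) ⊆ Iic N := by
      refine insert_subset (mem_Iic.2 ?_) ((erase_subset _ _).trans hS)
      have := mem_Iic.1 (hS hp2)
      omega
    obtain ⟨R, hR, hTR⟩ := ih _ (by rw [sum_insert fun h => hp (mem_of_mem_erase h)]; omega)
      (S := insert p (S.erase (p + 2))) hT rfl
    exact ⟨R, hR, (reflTransGen_pairFlip_hop hp2 hp1 hp (mem_Iic.1 (hS hp2))).trans hTR⟩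
  push Not at hadj hhop
  exact ⟨S, ⟨hadj, hhop⟩, .refl⟩

namespace Reduced

theorem mem_of_add_two_mul (hR : Reduced S) {p : ℕ} : ∀ {k}, p + 2 * k ∈ S → p ∈ S
  | 0, h => h
  | k + 1, h => mem_of_add_two_mul hR (hR.2 _ (by rwa [mul_add_one, ← add_assoc] at h))

theorem mod_two_eq (hR : Reduced S) (hp : p ∈ S) (hq : q ∈ S) : p % 2 = q % 2 := by
  have hp' := hR.mem_of_add_two_mul (k := p / 2) (by rwa [Nat.mod_add_div])
  have hq' := hR.mem_of_add_two_mul (k := q / 2) (by rwa [Nat.mod_add_div])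
  by_contra hne
  rcases Nat.mod_two_eq_zero_or_one p with h | h
  · exact hR.1 0 (by rwa [h] at hp') (by rwa [show q % 2 = 1 by omega] at hq')
  · exact hR.1 0 (by rwa [show q % 2 = 0 by omega] at hq') (by rwa [h] at hp')

theorem charge_eq (hR : Reduced S) (hp : p ∈ S) : charge S = (-1) ^ (p + 1) * #S := by
  rw [charge, ← nsmul_eq_mul', ← sum_const]
  refine sum_congr rfl fun q hq => ?_
  rw [neg_one_pow_eq_pow_mod_two, Nat.add_mod, hR.mod_two_eq hq hp, ← Nat.add_mod,
    ← neg_one_pow_eq_pow_mod_two]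

theorem charge_ne_zero (hR : Reduced S) (hS : S.Nonempty) : charge S ≠ 0 := by
  obtain ⟨p, hp⟩ := hS
  rw [hR.charge_eq hp]
  exact mul_ne_zero (pow_ne_zero _ (by norm_num)) (by exact_mod_cast (card_pos.2 ⟨p, hp⟩).ne')

theorem subset_or_subset (hS : Reduced S) (hT : Reduced T)
    (hST : ∀ s ∈ S, ∀ t ∈ T, s % 2 = t % 2) : S ⊆ T ∨ T ⊆ S := by
  by_contra! h
  obtain ⟨⟨s, hs, hsT⟩, ⟨t, ht, htS⟩⟩ := And.intro (not_subset.1 h.1) (not_subset.1 h.2)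
  have hst := hST s hs t ht
  rcases le_total s t with hle | hle
  · exact hsT (hT.mem_of_add_two_mul (k := (t - s) / 2)
      (by rwa [show s + 2 * ((t - s) / 2) = t by omega]))
  · exact htS (hS.mem_of_add_two_mul (k := (s - t) / 2)
      (by rwa [show t + 2 * ((s - t) / 2) = s by omega]))

theorem eq_of_charge_eq (hS : Reduced S) (hT : Reduced T) (h : charge S = charge T) :
    S = T := by
  rcases S.eq_empty_or_nonempty with rfl | ⟨p, hp⟩ <;>
    rcases T.eq_empty_or_nonempty with rfl | ⟨q, hq⟩
  · rfl
  · exact absurd h.symm (hT.charge_ne_zero ⟨q, hq⟩)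
  · exact absurd h (hS.charge_ne_zero ⟨p, hp⟩)
  · rw [hS.charge_eq hp, hT.charge_eq hq] at h
    have hcard : #S = #T := by
      simpa [Int.natAbs_mul, Int.natAbs_pow] using congrArg Int.natAbs h
    have hpq : p % 2 = q % 2 := by
      rw [hcard, mul_left_inj' (by exact_mod_cast (card_pos.2 ⟨q, hq⟩).ne'),
        neg_one_pow_eq_pow_mod_two, neg_one_pow_eq_pow_mod_two (n := q + 1)] at h
      rcases Nat.mod_two_eq_zero_or_one p with hp2 | hp2 <;>
        rcases Nat.mod_two_eq_zero_or_one q with hq2 | hq2 <;>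
        simp_all [Nat.add_mod]
    have hST : ∀ s ∈ S, ∀ t ∈ T, s % 2 = t % 2 := fun s hs t ht => by
      rw [hS.mod_two_eq hs hp, hpq, hT.mod_two_eq hq ht]
    rcases hS.subset_or_subset hT hST with hsub | hsub
    · exact eq_of_subset_of_card_le hsub hcard.ge
    · exact (eq_of_subset_of_card_le hsub hcard.le).symm

end Reduced

theorem charge_eq_of_reflTransGen (h : ReflTransGen (PairFlip N) S T) : charge S = charge T := by
  induction h with
  | refl => rfl
  | tail _ hflip ih => exact ih.trans hflip.charge_eq

theorem reflTransGen_pairFlip_iff (hS : S ⊆ Iic N) (hT : T ⊆ Iic N) :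
    ReflTransGen (PairFlip N) S T ↔ charge S = charge T := by
  refine ⟨charge_eq_of_reflTransGen, fun h => ?_⟩
  obtain ⟨R, hR, hSR⟩ := exists_reduced_reflTransGen hS
  obtain ⟨R', hR', hTR'⟩ := exists_reduced_reflTransGen hT
  have hRR' : R = R' := hR.eq_of_charge_eq hR' <| by
    rw [← charge_eq_of_reflTransGen hSR, ← charge_eq_of_reflTransGen hTR', h]
  exact hSR.trans (hRR' ▸ symm_of (ReflTransGen (PairFlip N)) hTR')

end Particles

section Walls

variable {D : ℕ}

def coord (x : Fin D → ZMod 2) (j : ℕ) : ZMod 2 :=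
  if h : 1 ≤ j ∧ j ≤ D then x ⟨j - 1, by omega⟩ else 0

def walls (x : Fin D → ZMod 2) : Finset ℕ :=
  (Iic D).filter fun j => coord x j ≠ coord x (j + 1)

theorem coord_add (x y : Fin D → ZMod 2) (j : ℕ) : coord (x + y) j = coord x j + coord y j := by
  unfold coord
  split_ifs <;> simp

theorem coord_succ (x : Fin D → ZMod 2) (k : Fin D) : coord x (k + 1) = x k := by
  rw [coord, dif_pos (by omega)]
  rfl

theorem coord_eI {a b : ℕ} (ha : 1 ≤ a) (hb : b ≤ D) (j : ℕ) :
    coord (eI D (a, b)) j = if a ≤ j ∧ j ≤ b then 1 else 0 := by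
  dsimp only [coord, eI]
  split_ifs <;> first | rfl | omega

theorem basisVec_eq_eI (i : ℕ) : basisVec D i = eI D (i, i) := by
  funext k
  simp only [basisVec, eI, ← le_antisymm_iff, eq_comm]

theorem walls_add (x y : Fin D → ZMod 2) : walls (x + y) = symmDiff (walls x) (walls y) := by
  ext j
  simp only [walls, mem_symmDiff, mem_filter, coord_add]
  generalize coord x j = a, coord x (j + 1) = b, coord y j = c, coord y (j + 1) = d
  revert a b c d
  by_cases hj : j ∈ Iic D <;> simp only [hj] <;> decide

theorem walls_eI {a b : ℕ} (ha : 1 ≤ a) (hab : a ≤ b) (hb : b ≤ D) :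
    walls (eI D (a, b)) = {a - 1, b} := by
  ext j
  simp only [walls, mem_filter, mem_Iic, coord_eI ha hb, mem_insert, mem_singleton]
  split_ifs <;> grind

theorem walls_injective : Function.Injective (walls (D := D)) := by
  intro x y h
  have hcoord : ∀ j, coord x j = coord y j := by
    intro j
    induction j with
    | zero => rfl
    | succ j ih =>
      by_cases hj : j ≤ D
      · have hmem : j ∈ walls x ↔ j ∈ walls y := by rw [h]
        simp only [walls, mem_filter, mem_Iic, hj, true_and, ih] at hmem
        generalize coord y j = a, coord x (j + 1) = b, coord y (j + 1) = c at hmem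
        revert a b c
        decide
      · simp [coord, show ¬ j + 1 ≤ D by omega]
  funext k
  rw [← coord_succ x k, hcoord, coord_succ]

theorem walls_zero : walls (0 : Fin D → ZMod 2) = ∅ := by
  simp [walls, coord]

theorem walls_subset_Iic (x : Fin D → ZMod 2) : walls x ⊆ Iic D := filter_subset _ _

theorem walls_add_basisVec (x : Fin D → ZMod 2) {i : ℕ} (h1 : 1 ≤ i) (h2 : i ≤ D) :
    walls (x + basisVec D i) = symmDiff (walls x) {i - 1, i} := by
  rw [walls_add, basisVec_eq_eI, walls_eI h1 le_rfl h2]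

theorem sum_ite_eq_coord (x : Fin D → ZMod 2) (j : ℕ) :
    ∑ a : Fin D, (if a.1 + 1 = j then x a else 0) = coord x j := by
  by_cases hj : 1 ≤ j ∧ j ≤ D
  · rw [Fintype.sum_eq_single ⟨j - 1, by omega⟩
      fun a ha => if_neg fun h => ha (Fin.ext (show a.1 = j - 1 by omega)),
      if_pos (show j - 1 + 1 = j by omega), coord, dif_pos hj]
  · rw [coord, dif_neg hj]
    exact sum_eq_zero fun a _ => if_neg (by omega)

theorem bform_basisVec (x : Fin D → ZMod 2) {i : ℕ} (h1 : 1 ≤ i) (h2 : i ≤ D) :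
    bform D x (basisVec D i) = coord x (i - 1) + coord x (i + 1) := by
  have inner : ∀ a : Fin D,
      (∑ b : Fin D, if a.1 = b.1 + 1 ∨ b.1 = a.1 + 1 then x a * basisVec D i b else 0) =
        (if a.1 + 1 = i - 1 then x a else 0) + (if a.1 + 1 = i + 1 then x a else 0) := by
    intro a
    rw [Fintype.sum_eq_single ⟨i - 1, by omega⟩]
    · simp only [basisVec]
      split_ifs <;> first | omega | simp
    · intro b hb
      simp [basisVec, show ¬ b.1 + 1 = i from fun h => hb (Fin.ext (show b.1 = i - 1 by omega))]
  rw [bform, sum_congr rfl fun a _ => inner a, sum_add_distrib, sum_ite_eq_coord, sum_ite_eq_coord]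

theorem bform_add_basisVec (x : Fin D → ZMod 2) {i : ℕ} (h1 : 1 ≤ i) (h2 : i ≤ D) :
    bform D (x + basisVec D i) (basisVec D i) = bform D x (basisVec D i) := by
  rw [bform_basisVec _ h1 h2, bform_basisVec _ h1 h2, coord_add, coord_add, basisVec_eq_eI,
    coord_eI h1 h2, coord_eI h1 h2, if_neg (by omega), if_neg (by omega), add_zero, add_zero]

theorem bform_basisVec_eq_zero_iff (x : Fin D → ZMod 2) {i : ℕ} (h1 : 1 ≤ i) (h2 : i ≤ D) :
    bform D x (basisVec D i) = 0 ↔ (i - 1 ∈ walls x ↔ i ∈ walls x) := by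
  rw [bform_basisVec x h1 h2]
  simp only [walls, mem_filter, mem_Iic, show i - 1 ≤ D by omega, h2, true_and,
    Nat.sub_add_cancel h1]
  generalize coord x (i - 1) = a, coord x i = b, coord x (i + 1) = c
  revert a b c
  decide

theorem adj_iff {x y : Fin D → ZMod 2} :
    Adj D x y ↔
      ∃ i, 1 ≤ i ∧ i ≤ D ∧ y = x + basisVec D i ∧ (i - 1 ∈ walls x ↔ i ∈ walls x) := by
  have add_cancel_left (z : Fin D → ZMod 2) : x + (x + z) = z := by
    have hxx : x + x = 0 := funext fun k => CharTwo.add_self_eq_zero (x k)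
    rw [← add_assoc, hxx, zero_add]
  constructor
  · rintro ⟨i, h1, h2, hsum, hx, -⟩
    refine ⟨i, h1, h2, ?_, (bform_basisVec_eq_zero_iff x h1 h2).1 hx⟩
    rw [← hsum, add_cancel_left]
  · rintro ⟨i, h1, h2, rfl, hw⟩
    have hx := (bform_basisVec_eq_zero_iff x h1 h2).2 hw
    exact ⟨i, h1, h2, add_cancel_left _, hx, by rw [bform_add_basisVec x h1 h2, hx]⟩

theorem pairFlip_walls_of_adj {x y : Fin D → ZMod 2} (h : Adj D x y) :
    PairFlip D (walls x) (walls y) := by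
  obtain ⟨i, h1, h2, rfl, hw⟩ := adj_iff.1 h
  exact ⟨i - 1, by omega, by rwa [Nat.sub_add_cancel h1],
    by rw [walls_add_basisVec x h1 h2, Nat.sub_add_cancel h1]⟩

theorem exists_adj_of_pairFlip_walls {x : Fin D → ZMod 2} {T : Finset ℕ}
    (h : PairFlip D (walls x) T) : ∃ y, Adj D x y ∧ walls y = T := by
  obtain ⟨p, hp, hw, rfl⟩ := h
  exact ⟨x + basisVec D (p + 1), adj_iff.2 ⟨p + 1, by omega, hp, rfl, by simpa using hw⟩,
    walls_add_basisVec x (by omega) hp⟩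

theorem exists_reflTransGen_adj_of_pairFlip {x : Fin D → ZMod 2} {T : Finset ℕ}
    (h : ReflTransGen (PairFlip D) (walls x) T) :
    ∃ y, ReflTransGen (Adj D) x y ∧ walls y = T := by
  induction h with
  | refl => exact ⟨x, .refl, rfl⟩
  | tail _ hflip ih =>
    obtain ⟨y, hxy, rfl⟩ := ih
    obtain ⟨z, hyz, rfl⟩ := exists_adj_of_pairFlip_walls hflip
    exact ⟨z, hxy.tail hyz, rfl⟩

theorem reflTransGen_adj_iff {x y : Fin D → ZMod 2} :
    ReflTransGen (Adj D) x y ↔ charge (walls x) = charge (walls y) := by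
  rw [← reflTransGen_pairFlip_iff (walls_subset_Iic x) (walls_subset_Iic y)]
  refine ⟨fun h => ReflTransGen.lift walls (fun _ _ => pairFlip_walls_of_adj) _ _ h, fun h => ?_⟩
  obtain ⟨z, hxz, hz⟩ := exists_reflTransGen_adj_of_pairFlip h
  rwa [walls_injective hz] at hxz

end Walls

section Decompositions

variable {D : ℕ}

theorem _root_.NormalDecomp.of_cons {p : ℕ × ℕ} {L : List (ℕ × ℕ)}
    (h : NormalDecomp D (p :: L)) : NormalDecomp D L :=
  ⟨fun q hq => h.1 q (List.mem_cons_of_mem p hq), h.2.tail⟩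

theorem le_succ_of_mem_walls_sum {L : List (ℕ × ℕ)} (hL : NormalDecomp D L) {m : ℕ}
    (hm : ∀ q ∈ L.head?, m ≤ q.1) : ∀ j ∈ walls (L.map (eI D)).sum, m ≤ j + 1 := by
  induction L generalizing m with
  | nil => simp [walls_zero]
  | cons q T ih =>
    obtain ⟨hq1, hq12, hq2⟩ := hL.1 q List.mem_cons_self
    have hmq : m ≤ q.1 := hm q rfl
    intro j hj
    rw [List.map_cons, List.sum_cons, walls_add, walls_eI hq1 hq12 hq2] at hj
    rcases mem_union.1 (symmDiff_subset_union hj) with hj | hj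
    · simp only [mem_insert, mem_singleton] at hj
      omega
    · have := ih (NormalDecomp.of_cons hL) (m := q.2 + 2) (List.isChain_cons.1 hL.2).1 j hj
      omega

theorem two_mul_uval_cons (a b : ℕ) (L : List (ℕ × ℕ)) :
    2 * uval ((a, b) :: L) = (-1) ^ a + (-1) ^ (b + 1) + 2 * uval L := by
  rw [neg_one_pow_eq_pow_mod_two, neg_one_pow_eq_pow_mod_two (n := b + 1), Nat.add_mod b]
  simp only [uval, List.countP_cons, decide_eq_true_eq]
  rcases Nat.mod_two_eq_zero_or_one a with ha | ha <;>
    rcases Nat.mod_two_eq_zero_or_one b with hb | hb <;> norm_num [ha, hb] <;> ring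

theorem charge_walls_sum {L : List (ℕ × ℕ)} (hL : NormalDecomp D L) :
    charge (walls (L.map (eI D)).sum) = 2 * uval L := by
  induction L with
  | nil => simp [walls_zero, charge, uval]
  | cons q T ih =>
    obtain ⟨a, b⟩ := q
    obtain ⟨ha, hab, hb⟩ := hL.1 (a, b) List.mem_cons_self
    have hdisj : Disjoint {a - 1, b} (walls (T.map (eI D)).sum) := by
      have := le_succ_of_mem_walls_sum (NormalDecomp.of_cons hL) (m := b + 2)
        (List.isChain_cons.1 hL.2).1
      simp only [disjoint_insert_left, disjoint_singleton_left]
      exact ⟨fun h => by have := this _ h; omega, fun h => by have := this _ h; omega⟩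
    rw [List.map_cons, List.sum_cons, walls_add, walls_eI ha hab hb, hdisj.symmDiff_eq_sup,
      sup_eq_union, charge_union hdisj, ih (NormalDecomp.of_cons hL), two_mul_uval_cons, charge,
      sum_pair (by omega), Nat.sub_add_cancel ha]

end Decompositions

end DomainWall

theorem stmt_12_general (D : ℕ) (x x' : Fin D → ZMod 2)
    (L L' : List (ℕ × ℕ)) (hL : NormalDecomp D L) (hLsum : (L.map (eI D)).sum = x)
    (hL' : NormalDecomp D L') (hL'sum : (L'.map (eI D)).sum = x') :
    Relation.ReflTransGen (Adj D) x x' ↔ uval L = uval L' := by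
  rw [DomainWall.reflTransGen_adj_iff, ← hLsum, ← hL'sum, DomainWall.charge_walls_sum hL,
    DomainWall.charge_walls_sum hL']
  omega

/-- For `D` even, `x, x'` lie in the same connected component of the graph on `V`
if and only if `u(x) = u(x')`; so the components are exactly the fibers of `u`. -/
theorem stmt_12 (D : ℕ) (hD : Even D) (x x' : Fin D → ZMod 2)
    (L L' : List (ℕ × ℕ)) (hL : NormalDecomp D L) (hLsum : (L.map (eI D)).sum = x)
    (hL' : NormalDecomp D L') (hL'sum : (L'.map (eI D)).sum = x') :
    Relation.ReflTransGen (Adj D) x x' ↔ uval L = uval L' :=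
  stmt_12_general D x x' L L' hL hLsum hL' hL'sum
end
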